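/- For the lifted 𝕋²-action on the unit cosphere bundle S*ℝ⁴ = {(x,y,u,v) : ‖u‖²+‖v‖² = 1} with momentum map J(x,y,u,v) = (ρ₄, σ₄) = (x₁u₂−x₂u₁, y₁v₂−y₂v₁), the reduced space J⁻¹(0)/𝕋² is homeomorphic (via the Hilbert map (ρ₁,ρ₂,ρ₃,σ₁,σ₂,σ₃)) to the semialgebraic set {(ρ,σ) ∈ ℝ⁶ : ρ₁ ≥ 0, σ₁ ≥ 0, ρ₁² = ρ₂²+ρ₃², σ₁² = σ₂²+σ₃², ρ₁+ρ₃+σ₁+σ₃ = 2}. -/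

import Mathlib

noncomputable def rot (θ : ℝ) (p : ℝ × ℝ) : ℝ × ℝ :=
  (p.1 * Real.cos θ - p.2 * Real.sin θ, p.1 * Real.sin θ + p.2 * Real.cos θ)

def rho1 (x u : ℝ × ℝ) : ℝ := x.1 ^ 2 + x.2 ^ 2 + u.1 ^ 2 + u.2 ^ 2
def rho2 (x u : ℝ × ℝ) : ℝ := 2 * (x.1 * u.1 + x.2 * u.2)
def rho3 (x u : ℝ × ℝ) : ℝ := u.1 ^ 2 + u.2 ^ 2 - x.1 ^ 2 - x.2 ^ 2
def rho4 (x u : ℝ × ℝ) : ℝ := x.1 * u.2 - x.2 * u.1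

/-- A point of `T*ℝ⁴`: `z = ((x,y),(u,v))`. -/
abbrev Pt := ((ℝ × ℝ) × (ℝ × ℝ)) × ((ℝ × ℝ) × (ℝ × ℝ))

/-- `J⁻¹(0)` on the unit cosphere bundle `S*ℝ⁴ = {‖u‖²+‖v‖² = 1}`: `ρ₄ = 0`, `σ₄ = 0`. -/
def JzeroT : Set Pt :=
  {z | (z.2.1.1 ^ 2 + z.2.1.2 ^ 2) + (z.2.2.1 ^ 2 + z.2.2.2 ^ 2) = 1 ∧
       rho4 z.1.1 z.2.1 = 0 ∧ rho4 z.1.2 z.2.2 = 0}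

/-- The Hilbert map `(ρ₁,ρ₂,ρ₃,σ₁,σ₂,σ₃)`. -/
def hilbT (z : Pt) : ℝ × ℝ × ℝ × ℝ × ℝ × ℝ :=
  (rho1 z.1.1 z.2.1, rho2 z.1.1 z.2.1, rho3 z.1.1 z.2.1,
   rho1 z.1.2 z.2.2, rho2 z.1.2 z.2.2, rho3 z.1.2 z.2.2)

/-- The target semialgebraic set
`{ρ₁ ≥ 0, σ₁ ≥ 0, ρ₁² = ρ₂²+ρ₃², σ₁² = σ₂²+σ₃², ρ₁+ρ₃+σ₁+σ₃ = 2}`. -/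
def targetSet : Set (ℝ × ℝ × ℝ × ℝ × ℝ × ℝ) :=
  {w | 0 ≤ w.1 ∧ 0 ≤ w.2.2.2.1 ∧
       w.1 ^ 2 = w.2.1 ^ 2 + w.2.2.1 ^ 2 ∧
       w.2.2.2.1 ^ 2 = w.2.2.2.2.1 ^ 2 + w.2.2.2.2.2 ^ 2 ∧
       w.1 + w.2.2.1 + w.2.2.2.1 + w.2.2.2.2.2 = 2}

/-!
Write `X = x₁ + i x₂` and `U = u₁ + i u₂`. Then `ρ₁ = |X|² + |U|²`, `ρ₃ = |U|² - |X|²` and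
`ρ₂ + 2iρ₄ = 2 X̄U`, so on `ρ₄ = 0` the invariants record `|X|`, `|U|` and the real number `X̄U`.
These determine `(X, U)` up to a common phase: rotate `U` onto `U'`; if `U ≠ 0`, the rotated `X`
is then pinned down by `X̄U`. The cone relation is Lagrange's identity `ρ₁² = ρ₂² + ρ₃² + 4ρ₄²`,
and every point of the cone is attained with `X, U` real, by taking `U + iX` to be a square root
of `ρ₃ + iρ₂`.
-/

open Complex

section Invariants

variable (θ : ℝ) (x u : ℝ × ℝ)

lemma rho1_rot : rho1 (rot θ x) (rot θ u) = rho1 x u := by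
  simp only [rho1, rot]
  linear_combination (x.1 ^ 2 + x.2 ^ 2 + u.1 ^ 2 + u.2 ^ 2) * Real.sin_sq_add_cos_sq θ

lemma rho2_rot : rho2 (rot θ x) (rot θ u) = rho2 x u := by
  simp only [rho2, rot]
  linear_combination 2 * (x.1 * u.1 + x.2 * u.2) * Real.sin_sq_add_cos_sq θ

lemma rho3_rot : rho3 (rot θ x) (rot θ u) = rho3 x u := by
  simp only [rho3, rot]
  linear_combination (u.1 ^ 2 + u.2 ^ 2 - x.1 ^ 2 - x.2 ^ 2) * Real.sin_sq_add_cos_sq θ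

lemma rho4_rot : rho4 (rot θ x) (rot θ u) = rho4 x u := by
  simp only [rho4, rot]
  linear_combination (x.1 * u.2 - x.2 * u.1) * Real.sin_sq_add_cos_sq θ

lemma rho1_nonneg : 0 ≤ rho1 x u := by
  unfold rho1
  positivity

lemma rho1_add_rho3 : rho1 x u + rho3 x u = 2 * (u.1 ^ 2 + u.2 ^ 2) := by
  simp only [rho1, rho3]
  ring

lemma rho1_sub_rho3 : rho1 x u - rho3 x u = 2 * (x.1 ^ 2 + x.2 ^ 2) := by
  simp only [rho1, rho3]
  ring

lemma rho1_sq : rho1 x u ^ 2 = rho2 x u ^ 2 + rho3 x u ^ 2 + 4 * rho4 x u ^ 2 := by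
  simp only [rho1, rho2, rho3, rho4]
  ring

end Invariants

lemma rot_zero_right (θ : ℝ) : rot θ 0 = 0 := by
  simp [rot]

lemma rot_eq_re_im (θ : ℝ) (p : ℝ × ℝ) :
    rot θ p = ((exp (θ * I) * ⟨p.1, p.2⟩).re, (exp (θ * I) * ⟨p.1, p.2⟩).im) := by
  simp only [rot, mul_re, mul_im, exp_ofReal_mul_I_re, exp_ofReal_mul_I_im]
  ext <;> ring

lemma sq_add_sq_eq_zero_iff (p : ℝ × ℝ) : p.1 ^ 2 + p.2 ^ 2 = 0 ↔ p = 0 := by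
  rw [add_eq_zero_iff_of_nonneg (sq_nonneg _) (sq_nonneg _), sq_eq_zero_iff, sq_eq_zero_iff,
    Prod.ext_iff]
  rfl

lemma exists_rot_eq {p q : ℝ × ℝ} (h : p.1 ^ 2 + p.2 ^ 2 = q.1 ^ 2 + q.2 ^ 2) :
    ∃ θ, rot θ p = q := by
  by_cases hp : p = 0
  · have hq : q = 0 := by rwa [← sq_add_sq_eq_zero_iff, ← h, sq_add_sq_eq_zero_iff]
    exact ⟨0, by rw [hp, hq, rot_zero_right]⟩
  set P : ℂ := ⟨p.1, p.2⟩
  set Q : ℂ := ⟨q.1, q.2⟩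
  have hP : P ≠ 0 := fun h0 => hp (Prod.ext (congrArg re h0) (congrArg im h0))
  have hnorm : ‖Q‖ = ‖P‖ := by
    rw [← sq_eq_sq₀ (norm_nonneg _) (norm_nonneg _), Complex.sq_norm, Complex.sq_norm, normSq_mk, normSq_mk]
    linear_combination -h
  obtain ⟨θ, hθ⟩ := (norm_eq_one_iff (Q / P)).1 (by
    rw [norm_div, hnorm, div_self (norm_ne_zero_iff.2 hP)])
  exact ⟨θ, by rw [rot_eq_re_im, hθ, div_mul_cancel₀ _ hP]⟩

lemma eq_of_rho2_eq_of_rho4_eq {x x' u : ℝ × ℝ} (hu : u ≠ 0)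
    (h2 : rho2 x u = rho2 x' u) (h4 : rho4 x u = rho4 x' u) : x = x' := by
  have hu' : u.1 ^ 2 + u.2 ^ 2 ≠ 0 := (sq_add_sq_eq_zero_iff u).not.2 hu
  simp only [rho2, rho4] at h2 h4
  ext
  · exact mul_right_cancel₀ hu' (by linear_combination (u.1 / 2) * h2 + u.2 * h4)
  · exact mul_right_cancel₀ hu' (by linear_combination (u.2 / 2) * h2 - u.1 * h4)

lemma exists_rot_eq_of_rho_eq {x u x' u' : ℝ × ℝ} (h4 : rho4 x u = 0) (h4' : rho4 x' u' = 0)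
    (h1 : rho1 x u = rho1 x' u') (h2 : rho2 x u = rho2 x' u') (h3 : rho3 x u = rho3 x' u') :
    ∃ θ, rot θ x = x' ∧ rot θ u = u' := by
  have hu : u.1 ^ 2 + u.2 ^ 2 = u'.1 ^ 2 + u'.2 ^ 2 := by
    linear_combination (h1 + h3 + rho1_add_rho3 x' u' - rho1_add_rho3 x u) / 2
  by_cases hu0 : u = 0
  · have hu0' : u' = 0 := by rwa [← sq_add_sq_eq_zero_iff, ← hu, sq_add_sq_eq_zero_iff]
    have hx : x.1 ^ 2 + x.2 ^ 2 = x'.1 ^ 2 + x'.2 ^ 2 := by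
      linear_combination (h1 - h3 + rho1_sub_rho3 x' u' - rho1_sub_rho3 x u) / 2
    obtain ⟨θ, hθ⟩ := exists_rot_eq hx
    exact ⟨θ, hθ, by rw [hu0, hu0', rot_zero_right]⟩
  · obtain ⟨θ, hθ⟩ := exists_rot_eq hu
    have hu0' : u' ≠ 0 := by rwa [Ne, ← sq_add_sq_eq_zero_iff, ← hu, sq_add_sq_eq_zero_iff]
    refine ⟨θ, eq_of_rho2_eq_of_rho4_eq hu0' ?_ ?_, hθ⟩
    · rw [← hθ, rho2_rot, h2, hθ]
    · rw [← hθ, rho4_rot, h4, hθ, h4']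

lemma exists_rho_eq {r₁ r₂ r₃ : ℝ} (h₁ : 0 ≤ r₁) (hcone : r₁ ^ 2 = r₂ ^ 2 + r₃ ^ 2) :
    ∃ x u : ℝ × ℝ, rho4 x u = 0 ∧ rho1 x u = r₁ ∧ rho2 x u = r₂ ∧ rho3 x u = r₃ := by
  obtain ⟨z, hz⟩ := IsAlgClosed.exists_pow_nat_eq (⟨r₃, r₂⟩ : ℂ) two_pos
  have hre : z.re ^ 2 - z.im ^ 2 = r₃ := by
    linear_combination (by simpa only [sq, mul_re] using congrArg re hz : _ = r₃)
  have him : 2 * (z.re * z.im) = r₂ := by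
    linear_combination (by simpa only [sq, mul_im] using congrArg im hz : _ = r₂)
  have hnorm : (z.im ^ 2 + z.re ^ 2) ^ 2 = r₁ ^ 2 := by
    rw [hcone, ← hre, ← him]
    ring
  refine ⟨(z.im, 0), (z.re, 0), by simp [rho4], ?_, ?_, ?_⟩
  · simpa [rho1] using (sq_eq_sq₀ (by positivity) h₁).1 hnorm
  · simp only [rho2, ← him]
    ring
  · simp only [rho3, ← hre]
    ring

lemma hilbT_eq_iff_exists_rot {z w : Pt} (hz : z ∈ JzeroT) (hw : w ∈ JzeroT) :
    hilbT z = hilbT w ↔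
      ∃ θ φ : ℝ, ((rot θ z.1.1, rot φ z.1.2), (rot θ z.2.1, rot φ z.2.2)) = w := by
  obtain ⟨⟨x, y⟩, u, v⟩ := z
  obtain ⟨⟨x', y'⟩, u', v'⟩ := w
  obtain ⟨-, hρ, hσ⟩ := hz
  obtain ⟨-, hρ', hσ'⟩ := hw
  simp only [hilbT, Prod.mk.injEq]
  constructor
  · rintro ⟨h1, h2, h3, h4, h5, h6⟩
    obtain ⟨θ, hx, hu⟩ := exists_rot_eq_of_rho_eq hρ hρ' h1 h2 h3
    obtain ⟨φ, hy, hv⟩ := exists_rot_eq_of_rho_eq hσ hσ' h4 h5 h6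
    exact ⟨θ, φ, ⟨hx, hy⟩, hu, hv⟩
  · rintro ⟨θ, φ, ⟨rfl, rfl⟩, rfl, rfl⟩
    simp only [rho1_rot, rho2_rot, rho3_rot, and_self]

lemma hilbT_image_JzeroT : hilbT '' JzeroT = targetSet := by
  ext w
  constructor
  · rintro ⟨⟨⟨x, y⟩, u, v⟩, ⟨hunit, hρ, hσ⟩, rfl⟩
    dsimp only at hunit hρ hσ
    simp only [hilbT, targetSet, Set.mem_ofPred_eq]
    refine ⟨rho1_nonneg x u, rho1_nonneg y v, ?_, ?_, ?_⟩
    · simpa [hρ] using rho1_sq x u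
    · simpa [hσ] using rho1_sq y v
    · linear_combination rho1_add_rho3 x u + rho1_add_rho3 y v + 2 * hunit
  · obtain ⟨r₁, r₂, r₃, s₁, s₂, s₃⟩ := w
    rintro ⟨hr₁, hs₁, hr, hs, hsum⟩
    obtain ⟨x, u, hρ, rfl, rfl, rfl⟩ := exists_rho_eq hr₁ hr
    obtain ⟨y, v, hσ, rfl, rfl, rfl⟩ := exists_rho_eq hs₁ hs
    refine ⟨((x, y), u, v), ⟨?_, hρ, hσ⟩, rfl⟩
    linear_combination (hsum - rho1_add_rho3 x u - rho1_add_rho3 y v) / 2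

theorem stmt10 :
    (∀ z ∈ JzeroT, ∀ w ∈ JzeroT,
      (hilbT z = hilbT w ↔
        ∃ θ φ : ℝ,
          ((rot θ z.1.1, rot φ z.1.2), (rot θ z.2.1, rot φ z.2.2)) = w)) ∧
    hilbT '' JzeroT = targetSet :=
  ⟨fun _ hz _ hw => hilbT_eq_iff_exists_rot hz hw, hilbT_image_JzeroT⟩
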